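/- For every integer n ≥ 2, the intermediate rank of the additive semigroup A^+(B_n) is r3(A^+(B_n)) = n·(n!) + 2n − 2. -/

import Mathlib

/-- The Brandt semigroup `B_n`, modeled as `Option (Fin n × Fin n)` where
`none` plays the role of the (two-sided) zero element `ϑ`. -/
def Brandt (n : ℕ) : Type := Option (Fin n × Fin n)

instance (n : ℕ) : DecidableEq (Brandt n) :=
  inferInstanceAs (DecidableEq (Option (Fin n × Fin n)))

instance (n : ℕ) : Fintype (Brandt n) :=
  inferInstanceAs (Fintype (Option (Fin n × Fin n)))

namespace Brandt

/-- The zero element `ϑ` of `B_n`. -/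
def theta (n : ℕ) : Brandt n := none

/-- The element `(i, j)` of `B_n`. -/
def pair {n : ℕ} (i j : Fin n) : Brandt n := some (i, j)

/-- The addition of the Brandt semigroup:
`(i,j) + (k,l) = (i,l)` if `j = k` and `ϑ` otherwise; `ϑ` is absorbing. -/
def add {n : ℕ} : Option (Fin n × Fin n) → Option (Fin n × Fin n) → Option (Fin n × Fin n)
  | some (i, j), some (k, l) => if j = k then some (i, l) else none
  | _, _ => none

instance (n : ℕ) : Add (Brandt n) := ⟨fun a b => Brandt.add a b⟩

end Brandt

/-- `M(B_n)`: all self-maps of `B_n`, with pointwise addition. -/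
abbrev MB (n : ℕ) := Brandt n → Brandt n

/-- `g` is an endomorphism of `(B_n, +)`. -/
def IsEndo {n : ℕ} (g : MB n) : Prop := ∀ a b : Brandt n, g (a + b) = g a + g b

/-- `g` is an automorphism of `(B_n, +)`. -/
def IsAuto {n : ℕ} (g : MB n) : Prop := IsEndo g ∧ Function.Bijective g

/-- The constant map `ξ_c` on `B_n` with value `c`. -/
def xi {n : ℕ} (c : Brandt n) : MB n := fun _ => c

/-- `C_{B_n}`, the set of all constant maps on `B_n`. -/
def ConstMaps (n : ℕ) : Set (MB n) := {f | ∃ c : Brandt n, f = xi c}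

/-- `f` is an affine map: a sum of an endomorphism and a constant map. -/
def IsAffine {n : ℕ} (f : MB n) : Prop := ∃ g c, IsEndo g ∧ f = g + xi c

/-- `A^+(B_n)`: the subsemigroup of `(M(B_n), +)` generated by the affine maps. -/
def Aplus (n : ℕ) : AddSubsemigroup (MB n) := AddSubsemigroup.closure {f | IsAffine f}

/-- `A^+(B_n)` as a set of maps. -/
def AplusSet (n : ℕ) : Set (MB n) := (Aplus n : Set (MB n))

/-- The support of `f`: the set of elements not mapped to `ϑ`. -/
def supp {n : ℕ} (f : MB n) : Set (Brandt n) := {a | f a ≠ Brandt.theta n}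

/-- `X_k`: the set of `k`-support elements of `X`. -/
def supportPart {n : ℕ} (X : Set (MB n)) (k : ℕ) : Set (MB n) :=
  {f ∈ X | (supp f).ncard = k}

/-- A subset `U` of an additive semigroup is independent if no element of `U`
lies in the subsemigroup generated by the remaining elements of `U`. -/
def IndepSet {β : Type*} [Add β] (U : Set β) : Prop :=
  ∀ a ∈ U, a ∉ AddSubsemigroup.closure (U \ {a})

/-- The `n`-support map `(p, q; σ)`, sending `(i, p)` to `(iσ, q)` and
everything else to `ϑ`. -/
def nMap {n : ℕ} (p q : Fin n) (σ : Equiv.Perm (Fin n)) : MB n := fun a =>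
  Option.elim (α := Fin n × Fin n) a (Brandt.theta n)
    (fun x => if x.2 = p then Brandt.pair (σ x.1) q else Brandt.theta n)

/-- The singleton support map `⟨(k, l), α⟩`, sending `(k, l)` to `α` and
everything else to `ϑ`. -/
def sMap {n : ℕ} (k l : Fin n) (α : Brandt n) : MB n :=
  fun a => if a = Brandt.pair k l then α else Brandt.theta n

/-- The set `S = {ξ_(i, i+1) : i ∈ [n-1]} ∪ {ξ_(n, 1)}`, i.e. the constant maps
`ξ_(i, i+1)` where the successor is taken cyclically in `[n]`. -/
def setS (n : ℕ) : Set (MB n) := {f | ∃ i : Fin n, f = xi (Brandt.pair i (finRotate n i))}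

/-- The set `T = {g + h : g ∈ Aut(B_n), h ∈ S}`. -/
def setT (n : ℕ) : Set (MB n) := {f | ∃ g h, IsAuto g ∧ h ∈ setS n ∧ f = g + h}

open Relation Set

section Graph

lemma rtg_to_tg {α : Type} {r : α → α → Prop} {a b : α} (h : ReflTransGen r a b)
    (hne : a ≠ b) : TransGen r a b :=
  (Relation.reflTransGen_iff_eq_or_transGen.mp h).resolve_left (Ne.symm hne)

lemma tg_first_step {α : Type} {r : α → α → Prop} {a b : α} (h : TransGen r a b) :
    ∃ c, r a c := by
  induction h using Relation.TransGen.head_induction_on with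
  | single h => exact ⟨_, h⟩
  | head h _ _ => exact ⟨_, h⟩

lemma deloop {α : Type} {r : α → α → Prop} {x y : α} (h : TransGen r x y) (hxy : x ≠ y) :
    TransGen (fun a b => r a b ∧ a ≠ b) x y := by
  induction h with
  | single h => exact .single ⟨h, hxy⟩
  | @tail b c hab hbc ih =>
    rcases eq_or_ne b c with rfl | hbc'
    · exact ih hxy
    rcases eq_or_ne x b with rfl | hxb
    · exact .single ⟨hbc, hbc'⟩
    · exact (ih hxb).tail ⟨hbc, hbc'⟩

open Fin.NatCast in
lemma cycle_reach {α : Type} {p : ℕ} [NeZero p] (c : Fin p → α) (r' : α → α → Prop)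
    (hc : ∀ i, r' (c i) (c (i + 1))) (i j : Fin p) : ReflTransGen r' (c i) (c j) := by
  have key : ∀ (d : ℕ) (i : Fin p), ReflTransGen r' (c i) (c (i + (d : Fin p))) := by
    intro d
    induction d with
    | zero => intro i; simpa using ReflTransGen.refl
    | succ d ih =>
      intro i
      have h1 : (((d+1 : ℕ)) : Fin p) = (d : Fin p) + 1 := by push_cast; ring
      rw [h1, ← add_assoc]
      exact (ih i).tail (hc _)
  have := key (j - i).val i
  rwa [Fin.cast_val_eq_self, add_sub_cancel] at this

theorem graph_bound : ∀ (N : ℕ) (α : Type) (_ : Finite α) (r : α → α → Prop),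
    Nat.card α ≤ N →
    (∀ i, ¬ r i i) →
    (∀ i j : α, i ≠ j → TransGen r i j) →
    (∀ i j : α, r i j → ¬ TransGen (fun a b => r a b ∧ ¬(a = i ∧ b = j)) i j) →
    {e : α × α | r e.1 e.2}.ncard ≤ 2 * Nat.card α - 2 := by
  intro N
  induction N with
  | zero =>
    intro α hfin r hcard hL hS hI
    haveI := hfin
    by_cases hE : ∃ u v, r u v
    · obtain ⟨u, v, huv⟩ := hE
      haveI : Nonempty α := ⟨u⟩
      have := Nat.card_pos (α := α)
      omega
    · push_neg at hE
      have : {e : α × α | r e.1 e.2} = ∅ := by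
        ext e; simp [hE e.1 e.2]
      simp [this]
  | succ N ih =>
    intro α hfin r hcard hL hS hI
    haveI := hfin
    by_cases hE : ∃ u v, r u v
    swap
    · push_neg at hE
      have : {e : α × α | r e.1 e.2} = ∅ := by
        ext e; simp [hE e.1 e.2]
      simp [this]
    obtain ⟨u, v, huv⟩ := hE
    have huvne : u ≠ v := fun h => hL u (h ▸ huv)
    -- out-neighbour function
    have hout : ∀ x : α, ∃ y, r x y := by
      intro x
      rcases eq_or_ne x u with rfl | hx
      · exact ⟨v, huv⟩
      · exact tg_first_step (hS x u hx)
    choose f hf using hout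
    -- a periodic point
    have hper : ∃ t, 0 < t ∧ ∃ y : α, f^[t] y = y := by
      obtain ⟨a, b, hab, heq⟩ := Finite.exists_ne_map_eq_of_infinite (fun n : ℕ => f^[n] u)
      rcases Nat.lt_or_ge a b with h | h
      · refine ⟨b - a, by omega, f^[a] u, ?_⟩
        rw [← Function.iterate_add_apply]
        rw [Nat.sub_add_cancel (le_of_lt h)]
        exact heq.symm
      · have h' : b < a := lt_of_le_of_ne h (Ne.symm hab)
        refine ⟨a - b, by omega, f^[b] u, ?_⟩
        rw [← Function.iterate_add_apply]
        rw [Nat.sub_add_cancel (le_of_lt h')]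
        exact heq
    -- minimal period
    classical
    let P : ℕ → Prop := fun t => 0 < t ∧ ∃ y : α, f^[t] y = y
    have hPex : ∃ t, P t := hper
    set p := Nat.find hPex with hp_def
    obtain ⟨hp_pos, y, hy⟩ := Nat.find_spec hPex
    rw [← hp_def] at hy hp_pos
    have hp_min : ∀ t, 0 < t → t < p → ∀ z : α, f^[t] z ≠ z := by
      intro t ht htp z hz
      rw [hp_def] at htp
      exact Nat.find_min hPex htp ⟨ht, z, hz⟩
    have hp2 : 2 ≤ p := by
      by_contra hcon
      push_neg at hcon
      have hp1 : p = 1 := by omega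
      have h1 : f y = y := by
        have := hy; rw [hp1] at this; simpa using this
      exact hL y (by have := hf y; rwa [h1] at this)
    haveI : NeZero p := ⟨by omega⟩
    set c : Fin p → α := fun i => f^[i.val] y with hc_def
    have hfix : ∀ m : ℕ, f^[p * m] y = y := by
      intro m
      induction m with
      | zero => simp
      | succ m ihm => rw [Nat.mul_succ, Function.iterate_add_apply, hy, ihm]
    have hcyc : ∀ k : ℕ, f^[k % p] y = f^[k] y := by
      intro k
      conv_rhs => rw [← Nat.mod_add_div k p]
      rw [Function.iterate_add_apply, hfix]
    have hcinj : Function.Injective c := by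
      have key : ∀ i j : Fin p, i.val < j.val → c i ≠ c j := by
        intro i j hij heq
        have h1 : f^[p - j.val + j.val] y = f^[p - j.val + i.val] y := by
          rw [Function.iterate_add_apply, Function.iterate_add_apply]
          exact congrArg f^[p - j.val] heq.symm
        rw [Nat.sub_add_cancel (le_of_lt j.isLt), hy] at h1
        exact hp_min _ (by omega) (by omega) y h1.symm
      intro i j heq
      rcases lt_trichotomy i.val j.val with h | h | h
      · exact absurd heq (key i j h)
      · exact Fin.ext h
      · exact absurd heq.symm (key j i h)
    have hcedge : ∀ i : Fin p, r (c i) (c (i + 1)) := by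
      intro i
      have hceq : c (i + 1) = f (c i) := by
        show f^[((i + 1 : Fin p)).val] y = f (f^[i.val] y)
        calc f^[((i + 1 : Fin p)).val] y = f^[(i.val + 1) % p] y := by
              rw [Fin.add_def]; simp
          _ = f^[i.val + 1] y := hcyc _
          _ = f (f^[i.val] y) := Function.iterate_succ_apply' f _ y
      rw [hceq]; exact hf (c i)
    set C : Set α := Set.range c with hC_def
    set EC : Set (α × α) := Set.range (fun i : Fin p => (c i, c (i + 1))) with hEC_def
    have hECr : ∀ e ∈ EC, r e.1 e.2 := by
      rintro e ⟨i, rfl⟩; exact hcedge i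
    have hECC : ∀ e ∈ EC, e.1 ∈ C ∧ e.2 ∈ C := by
      rintro e ⟨i, rfl⟩; exact ⟨⟨i, rfl⟩, ⟨i + 1, rfl⟩⟩
    have hreach : ∀ e : α × α, e ∉ EC → ∀ x y, x ∈ C → y ∈ C →
        ReflTransGen (fun a b => r a b ∧ ¬(a = e.1 ∧ b = e.2)) x y := by
      rintro e he x y ⟨i, rfl⟩ ⟨j, rfl⟩
      refine cycle_reach c _ (fun k => ⟨hcedge k, ?_⟩) i j
      rintro ⟨h1, h2⟩
      exact he ⟨k, by rw [Prod.ext_iff]; exact ⟨h1, h2⟩⟩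
    have hinternal : ∀ x y, r x y → x ∈ C → y ∈ C → (x, y) ∈ EC := by
      intro x y hxy hx hy
      by_contra hne
      have hxyne : x ≠ y := fun h => hL x (h ▸ hxy)
      exact hI x y hxy (rtg_to_tg (hreach (x, y) hne x y hx hy) hxyne)
    -- the quotient
    let s : Setoid α := ⟨fun x y => x = y ∨ (x ∈ C ∧ y ∈ C), by
      constructor
      · intro x; exact Or.inl rfl
      · rintro x y (rfl | ⟨h1, h2⟩); exacts [Or.inl rfl, Or.inr ⟨h2, h1⟩]
      · rintro x y z (rfl | ⟨h1, h2⟩) (rfl | ⟨h3, h4⟩)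
        · exact Or.inl rfl
        · exact Or.inr ⟨h3, h4⟩
        · exact Or.inr ⟨h1, h2⟩
        · exact Or.inr ⟨h1, h4⟩⟩
    let Q := Quotient s
    haveI : Finite Q := Quotient.finite s
    let π : α → Q := Quotient.mk s
    have hπ : ∀ x y : α, π x = π y ↔ (x = y ∨ (x ∈ C ∧ y ∈ C)) :=
      fun x y => ⟨fun h => Quotient.exact h, fun h => Quotient.sound h⟩
    let r' : Q → Q → Prop := fun X Y => X ≠ Y ∧ ∃ x y, π x = X ∧ π y = Y ∧ r x y
    -- cardinality of Q
    have hCcard : C.ncard = p := by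
      rw [hC_def, ← Set.image_univ, Set.ncard_image_of_injective _ hcinj,
        Set.ncard_univ, Nat.card_eq_fintype_card, Fintype.card_fin]
    have hple : p ≤ Nat.card α := by
      rw [← hCcard, ← Set.ncard_univ α]
      exact Set.ncard_le_ncard (Set.subset_univ C) (Set.toFinite _)
    have hQcard : Nat.card Q + p = Nat.card α + 1 := by
      have hEquiv : Q ≃ Option {x : α // x ∉ C} := by
        refine Equiv.ofBijective (Quotient.lift
          (fun x => if h : x ∈ C then none else some ⟨x, h⟩) ?_) ⟨?_, ?_⟩
        · rintro x y (rfl | ⟨h1, h2⟩)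
          · rfl
          · simp [h1, h2]
        · intro X Y hXY
          obtain ⟨x, rfl⟩ := Quotient.exists_rep X
          obtain ⟨z, rfl⟩ := Quotient.exists_rep Y
          simp only [Quotient.lift_mk] at hXY
          by_cases hx : x ∈ C <;> by_cases hz : z ∈ C <;> simp [hx, hz] at hXY
          · exact Quotient.sound (Or.inr ⟨hx, hz⟩)
          · exact Quotient.sound (Or.inl hXY)
        · intro o
          match o with
          | none =>
            refine ⟨Quotient.mk s (c 0), ?_⟩
            simp only [Quotient.lift_mk]
            rw [dif_pos ⟨0, rfl⟩]
          | some ⟨x, hx⟩ =>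
            refine ⟨Quotient.mk s x, ?_⟩
            simp only [Quotient.lift_mk]
            rw [dif_neg hx]
      have h1 : Nat.card Q = Nat.card {x : α // x ∉ C} + 1 := by
        rw [Nat.card_congr hEquiv]
        simp [Nat.card_eq_fintype_card]
      have h2 : Nat.card {x : α // x ∉ C} = Cᶜ.ncard := by
        rw [← Nat.card_coe_set_eq]
        rfl
      have h3 := Set.ncard_add_ncard_compl C (Set.toFinite _) (Set.toFinite _)
      omega
    -- hypotheses for the quotient graph
    have hL' : ∀ X : Q, ¬ r' X X := by
      rintro X ⟨hne, -⟩; exact hne rfl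
    have hpush : ∀ a b : α, TransGen r a b → ReflTransGen r' (π a) (π b) := by
      intro a b h
      induction h with
      | single h =>
        rcases eq_or_ne (π a) (π _) with heq | hne
        · rw [heq]
        · exact ReflTransGen.single ⟨hne, a, _, rfl, rfl, h⟩
      | @tail b' c' hab hbc ihab =>
        rcases eq_or_ne (π b') (π c') with heq | hne
        · rw [← heq]; exact ihab
        · exact ihab.tail ⟨hne, b', c', rfl, rfl, hbc⟩
    have hS' : ∀ X Y : Q, X ≠ Y → TransGen r' X Y := by
      intro X Y hXY
      obtain ⟨x, rfl⟩ := Quotient.exists_rep X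
      obtain ⟨z, rfl⟩ := Quotient.exists_rep Y
      have hxz : x ≠ z := fun h => hXY (by rw [h])
      exact rtg_to_tg (hpush x z (hS x z hxz)) hXY
    have hI' : ∀ X Y : Q, r' X Y →
        ¬ TransGen (fun A B => r' A B ∧ ¬(A = X ∧ B = Y)) X Y := by
      rintro X Y ⟨hXY, u', v', hu', hv', ruv⟩ hTG
      have hnotEC : (u', v') ∉ EC := by
        intro hin
        obtain ⟨h1, h2⟩ := hECC _ hin
        exact hXY (by rw [← hu', ← hv']; exact Quotient.sound (Or.inr ⟨h1, h2⟩))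
      have intra : ∀ a b : α, π a = π b →
          ReflTransGen (fun a b => r a b ∧ ¬(a = u' ∧ b = v')) a b := by
        intro a b hab
        rcases (hπ a b).mp hab with rfl | ⟨h1, h2⟩
        · exact ReflTransGen.refl
        · exact hreach (u', v') hnotEC a b h1 h2
      apply hI u' v' ruv
      -- lift the quotient walk
      have lift : ∀ B, TransGen (fun A B => r' A B ∧ ¬(A = X ∧ B = Y)) X B →
          ∀ b, π b = B → TransGen (fun a b => r a b ∧ ¬(a = u' ∧ b = v')) u' b := by
        intro B hB
        induction hB with
        | @single Z h =>
          obtain ⟨⟨hne, x, z, hx, hz, hr⟩, hnotXY⟩ := h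
          intro b hb
          have hedgene : ¬(x = u' ∧ z = v') := by
            rintro ⟨rfl, rfl⟩
            exact hnotXY ⟨rfl, by rw [← hz]; exact hv'⟩
          have step1 : ReflTransGen (fun a b => r a b ∧ ¬(a = u' ∧ b = v')) u' x :=
            intra u' x (by rw [hu', hx])
          have step3 : ReflTransGen (fun a b => r a b ∧ ¬(a = u' ∧ b = v')) z b :=
            intra z b (by rw [hz, hb])
          exact (TransGen.trans_right step1 (TransGen.single ⟨hr, hedgene⟩)).trans_left step3
        | @tail B' B'' hXB' hstep ih =>
          obtain ⟨⟨hne, x, z, hx, hz, hr⟩, hnotXY⟩ := hstep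
          intro b hb
          have hedgene : ¬(x = u' ∧ z = v') := by
            rintro ⟨rfl, rfl⟩
            exact hnotXY ⟨by rw [← hx]; exact hu', by rw [← hz]; exact hv'⟩
          have step1 := ih x hx
          have step3 : ReflTransGen (fun a b => r a b ∧ ¬(a = u' ∧ b = v')) z b :=
            intra z b (by rw [hz, hb])
          exact ((step1.tail ⟨hr, hedgene⟩).trans_left step3)
      exact lift Y hTG v' hv'
    -- apply induction hypothesis
    have hcard' : Nat.card Q ≤ N := by omega
    have hbound' := ih Q inferInstance r' hcard' hL' hS' hI'
    -- injection from E \ EC into E'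
    set E : Set (α × α) := {e : α × α | r e.1 e.2} with hE_def
    set E' : Set (Q × Q) := {e : Q × Q | r' e.1 e.2} with hE'_def
    have hmap : ∀ e ∈ E \ EC, (π e.1, π e.2) ∈ E' := by
      rintro ⟨x, z⟩ ⟨hxz, hEC⟩
      refine ⟨?_, x, z, rfl, rfl, hxz⟩
      intro heq
      rcases (hπ x z).mp heq with rfl | ⟨h1, h2⟩
      · exact hL x hxz
      · exact hEC (hinternal x z hxz h1 h2)
    have hinjOn : Set.InjOn (fun e : α × α => (π e.1, π e.2)) (E \ EC) := by
      rintro ⟨x, z⟩ ⟨hxz, hxzEC⟩ ⟨x', z'⟩ ⟨hxz', hxzEC'⟩ heq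
      simp only [Prod.mk.injEq] at heq
      obtain ⟨heq1, heq2⟩ := heq
      by_contra hne
      have hxC : x ∈ C → z ∈ C → False := fun h1 h2 => hxzEC (hinternal x z hxz h1 h2)
      rcases (hπ x x').mp heq1 with rfl | ⟨hxc, hxc'⟩
      · -- x = x'
        rcases (hπ z z').mp heq2 with rfl | ⟨hzc, hzc'⟩
        · exact hne rfl
        · have hzz' : z ≠ z' := by
            rintro rfl; exact hne rfl
          apply hI x z hxz
          have step1 : TransGen (fun a b => r a b ∧ ¬(a = x ∧ b = z)) x z' :=
            TransGen.single ⟨hxz', fun h => hzz' h.2.symm⟩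
          exact step1.trans_left (hreach (x, z) hxzEC z' z hzc' hzc)
      · -- x, x' ∈ C
        have hzC : z ∉ C := fun h => hxC hxc h
        rcases (hπ z z').mp heq2 with rfl | ⟨hzc, hzc'⟩
        · -- z = z'
          have hxx' : x ≠ x' := by
            rintro rfl; exact hne rfl
          apply hI x z hxz
          have step2 : TransGen (fun a b => r a b ∧ ¬(a = x ∧ b = z)) x' z :=
            TransGen.single ⟨hxz', fun h => hxx' h.1.symm⟩
          exact TransGen.trans_right (hreach (x, z) hxzEC x x' hxc hxc') step2
        · exact hzC hzc
    have hEdiff : (E \ EC).ncard ≤ E'.ncard :=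
      Set.ncard_le_ncard_of_injOn _ hmap hinjOn (Set.toFinite _)
    have hECsub : EC ⊆ E := fun e he => hECr e he
    have hEsplit : E.ncard ≤ EC.ncard + (E \ EC).ncard := by
      have h1 : E ⊆ EC ∪ (E \ EC) := by
        intro e he
        by_cases h : e ∈ EC
        · exact Or.inl h
        · exact Or.inr ⟨he, h⟩
      exact le_trans (Set.ncard_le_ncard h1 (Set.toFinite _)) (Set.ncard_union_le _ _)
    have hECcard : EC.ncard ≤ p := by
      rw [hEC_def, ← Set.image_univ]
      refine le_trans (Set.ncard_image_le (Set.toFinite _)) ?_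
      rw [Set.ncard_univ, Nat.card_eq_fintype_card, Fintype.card_fin]
    omega

end Graph

section BrandtBasic

variable {n : ℕ}

lemma badd_def (a b : Brandt n) : a + b = Brandt.add a b := rfl

@[simp] lemma theta_add (a : Brandt n) : Brandt.theta n + a = Brandt.theta n := by
  cases a <;> rfl

@[simp] lemma add_theta (a : Brandt n) : a + Brandt.theta n = Brandt.theta n := by
  cases a with
  | none => rfl
  | some x => rfl

lemma pair_add_pair (i j k l : Fin n) :
    Brandt.pair i j + Brandt.pair k l =
      if j = k then Brandt.pair i l else Brandt.theta n := rfl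

lemma pair_ne_theta (i j : Fin n) : Brandt.pair i j ≠ Brandt.theta n := by
  intro h; exact Option.some_ne_none _ h

lemma pair_inj {i j k l : Fin n} (h : Brandt.pair i j = Brandt.pair k l) : i = k ∧ j = l := by
  have := Option.some_inj.mp h
  exact ⟨congrArg Prod.fst this, congrArg Prod.snd this⟩

lemma eq_pair_of_add {a b : Brandt n} {i j : Fin n} (h : a + b = Brandt.pair i j) :
    ∃ k, a = Brandt.pair i k ∧ b = Brandt.pair k j := by
  cases a with
  | none => exact absurd ((theta_add b).symm.trans h).symm (pair_ne_theta i j)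
  | some x =>
    cases b with
    | none => exact absurd ((add_theta _).symm.trans h) (fun hh => pair_ne_theta i j hh.symm)
    | some z =>
      have h' : (if x.2 = z.1 then Brandt.pair x.1 z.2 else Brandt.theta n) = Brandt.pair i j := h
      by_cases hc : x.2 = z.1
      · rw [if_pos hc] at h'
        obtain ⟨h1, h2⟩ := pair_inj h'
        exact ⟨x.2, by simp [Brandt.pair, ← h1, ← hc]; rfl, by simp [Brandt.pair, hc, ← h2]; rfl⟩
      · rw [if_neg hc] at h'
        exact absurd h'.symm (pair_ne_theta i j)

lemma add_ne_theta {a b : Brandt n} (h : a + b ≠ Brandt.theta n) :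
    a ≠ Brandt.theta n ∧ b ≠ Brandt.theta n := by
  constructor
  · rintro rfl; exact h (theta_add b)
  · rintro rfl; exact h (add_theta a)

lemma theta_ne_pair' (i j : Fin n) : Brandt.theta n ≠ Brandt.pair i j := by
  intro h; exact Option.some_ne_none _ h.symm

-- elements of Brandt are theta or pairs
lemma brandt_cases (a : Brandt n) : a = Brandt.theta n ∨ ∃ i j, a = Brandt.pair i j := by
  cases a with
  | none => exact Or.inl rfl
  | some x => exact Or.inr ⟨x.1, x.2, rfl⟩

end BrandtBasic

section MapsBasic

variable {n : ℕ}

lemma mb_add_apply (f g : MB n) (a : Brandt n) : (f + g) a = f a + g a := rfl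

@[simp] lemma xi_apply (c : Brandt n) (a : Brandt n) : xi c a = c := rfl

@[simp] lemma nMap_apply_some (p q : Fin n) (σ : Equiv.Perm (Fin n)) (x : Fin n × Fin n) :
    nMap p q σ (some x) =
      if x.2 = p then Brandt.pair (σ x.1) q else Brandt.theta n := rfl

lemma nMap_apply_theta (p q : Fin n) (σ : Equiv.Perm (Fin n)) :
    nMap p q σ (Brandt.theta n) = Brandt.theta n := rfl

lemma sMap_apply (k l : Fin n) (α : Brandt n) (a : Brandt n) :
    sMap k l α a = if a = Brandt.pair k l then α else Brandt.theta n := rfl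

@[simp] lemma some_eq_pair_iff (x : Fin n × Fin n) (k l : Fin n) :
    ((some x : Brandt n) = Brandt.pair k l) ↔ x = (k, l) :=
  ⟨fun h => Option.some_inj.mp h, fun h => by rw [h]; rfl⟩

@[simp] lemma theta_eq_pair_iff (k l : Fin n) :
    (Brandt.theta n = Brandt.pair k l) ↔ False :=
  ⟨fun h => Option.some_ne_none _ h.symm, False.elim⟩

attribute [simp] pair_add_pair theta_add add_theta

@[simp] lemma pair_eq_pair_iff (i j k l : Fin n) :
    (Brandt.pair i j = Brandt.pair k l) ↔ i = k ∧ j = l :=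
  ⟨pair_inj, fun ⟨h1, h2⟩ => by rw [h1, h2]⟩

lemma xi_injective : Function.Injective (xi (n := n)) := fun _ _ h => congrFun h (Brandt.theta n)

lemma xi_add_xi (a b : Brandt n) : xi a + xi b = xi (a + b) := rfl

lemma add_xi_theta (f : MB n) : f + xi (Brandt.theta n) = xi (Brandt.theta n) := by
  funext a; exact add_theta _

lemma xi_theta_add (f : MB n) : xi (Brandt.theta n) + f = xi (Brandt.theta n) := by
  funext a; exact theta_add _

lemma sMap_theta (k l : Fin n) : sMap k l (Brandt.theta n) = xi (Brandt.theta n) := by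
  funext a
  rw [sMap_apply, xi_apply]
  split_ifs <;> rfl

lemma nMap_add_xi (p q : Fin n) (σ : Equiv.Perm (Fin n)) (r s : Fin n) :
    nMap p q σ + xi (Brandt.pair r s) =
      if q = r then nMap p s σ else xi (Brandt.theta n) := by
  by_cases h : q = r
  · subst h
    rw [if_pos rfl]
    funext a
    rw [mb_add_apply]
    cases a with
    | none => exact theta_add _
    | some x => by_cases hx : x.2 = p <;> simp [hx, xi]
  · rw [if_neg h]
    funext a
    rw [mb_add_apply, xi_apply, xi_apply]
    cases a with
    | none => exact theta_add _
    | some x => by_cases hx : x.2 = p <;> simp [hx, h]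

@[simp] lemma nMap_apply_none (p q : Fin n) (σ : Equiv.Perm (Fin n)) :
    nMap p q σ none = Brandt.theta n := rfl

lemma some_ne_pair_fst {x : Fin n × Fin n} {k l : Fin n} (h : x.1 ≠ k) :
    (some x : Brandt n) ≠ Brandt.pair k l :=
  fun hcon => h (congrArg Prod.fst (Option.some_inj.mp hcon))

lemma some_ne_pair_snd {x : Fin n × Fin n} {k l : Fin n} (h : x.2 ≠ l) :
    (some x : Brandt n) ≠ Brandt.pair k l :=
  fun hcon => h (congrArg Prod.snd (Option.some_inj.mp hcon))

lemma none_ne_pair (k l : Fin n) : (none : Brandt n) ≠ Brandt.pair k l :=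
  fun h => Option.some_ne_none _ h.symm

lemma xi_add_nMap (r s : Fin n) (p q : Fin n) (σ : Equiv.Perm (Fin n)) :
    xi (Brandt.pair r s) + nMap p q σ = sMap (σ.symm s) p (Brandt.pair r q) := by
  funext a
  rw [mb_add_apply, sMap_apply, xi_apply]
  cases a with
  | none => rw [nMap_apply_none, add_theta]; exact (if_neg (none_ne_pair _ _)).symm
  | some x =>
    rw [nMap_apply_some]
    by_cases hx : x.2 = p
    · rw [if_pos hx, pair_add_pair]
      by_cases hs : s = σ x.1
      · rw [if_pos hs, if_pos]
        refine (some_eq_pair_iff _ _ _).mpr (Prod.ext_iff.mpr ?_)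
        exact ⟨by rw [hs]; simp, hx⟩
      · rw [if_neg hs, if_neg]
        apply some_ne_pair_fst
        intro h1
        exact hs (by rw [h1]; simp)
    · rw [if_neg hx, add_theta]; exact (if_neg (some_ne_pair_snd hx)).symm

lemma sMap_add (k l : Fin n) (α : Brandt n) (f : MB n) :
    sMap k l α + f = sMap k l (α + f (Brandt.pair k l)) := by
  funext a
  rw [mb_add_apply, sMap_apply, sMap_apply]
  by_cases h : a = Brandt.pair k l
  · rw [if_pos h, if_pos h, h]
  · rw [if_neg h, if_neg h, theta_add]

lemma add_sMap (f : MB n) (k l : Fin n) (α : Brandt n) :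
    f + sMap k l α = sMap k l (f (Brandt.pair k l) + α) := by
  funext a
  rw [mb_add_apply, sMap_apply, sMap_apply]
  by_cases h : a = Brandt.pair k l
  · rw [if_pos h, if_pos h, h]
  · rw [if_neg h, if_neg h, add_theta]

lemma nMap_add_nMap (p q : Fin n) (σ : Equiv.Perm (Fin n)) (p' q' : Fin n)
    (σ' : Equiv.Perm (Fin n)) :
    ∃ k l α, nMap p q σ + nMap p' q' σ' = sMap k l α := by
  by_cases hp : p = p'
  · subst hp
    refine ⟨σ'.symm q, p, Brandt.pair (σ (σ'.symm q)) q', ?_⟩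
    funext a
    rw [mb_add_apply, sMap_apply]
    cases a with
    | none => rw [nMap_apply_none, theta_add]; exact (if_neg (none_ne_pair _ _)).symm
    | some x =>
      rw [nMap_apply_some, nMap_apply_some]
      by_cases hx : x.2 = p
      · rw [if_pos hx, if_pos hx, pair_add_pair]
        by_cases hq : q = σ' x.1
        · rw [if_pos hq, if_pos]
          · congr 1
            rw [hq]; simp
          · refine (some_eq_pair_iff _ _ _).mpr (Prod.ext_iff.mpr ?_)
            exact ⟨by rw [hq]; simp, hx⟩
        · rw [if_neg hq, if_neg]
          apply some_ne_pair_fst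
          intro h1
          exact hq (by rw [h1]; simp)
      · rw [if_neg hx, if_neg hx, theta_add]; exact (if_neg (some_ne_pair_snd hx)).symm
  · refine ⟨σ'.symm q, p, Brandt.theta n, ?_⟩
    rw [sMap_theta]
    funext a
    rw [mb_add_apply, xi_apply]
    cases a with
    | none => rw [nMap_apply_none, theta_add]
    | some x =>
      rw [nMap_apply_some, nMap_apply_some]
      by_cases hx : x.2 = p
      · have hx' : ¬ (x.2 = p') := fun h => hp (hx.symm.trans h)
        rw [if_pos hx, if_neg hx', add_theta]
      · rw [if_neg hx, theta_add]

end MapsBasic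

section Classify

variable {n : ℕ}

/-- nonzero constant maps -/
def IsC {n : ℕ} (f : MB n) : Prop := ∃ i j : Fin n, f = xi (Brandt.pair i j)
def IsN {n : ℕ} (f : MB n) : Prop := ∃ p q σ, f = nMap p q σ
def IsS {n : ℕ} (f : MB n) : Prop := ∃ k l α, f = sMap k l α
def CNS {n : ℕ} (f : MB n) : Prop := IsC f ∨ IsN f ∨ IsS f

lemma nMap_ne_xi (hn : 2 ≤ n) (p q : Fin n) (σ : Equiv.Perm (Fin n)) (c : Brandt n) :
    nMap p q σ ≠ xi c := by
  intro h
  rcases brandt_cases c with rfl | ⟨i, j, rfl⟩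
  · have := congrFun h (Brandt.pair p p)
    rw [xi_apply] at this
    have h2 : nMap p q σ (Brandt.pair p p) = Brandt.pair (σ p) q := by
      show nMap p q σ (some (p, p)) = _
      rw [nMap_apply_some, if_pos rfl]
    rw [h2] at this
    exact pair_ne_theta _ _ this
  · have := congrFun h (Brandt.theta n)
    rw [xi_apply, nMap_apply_theta] at this
    exact theta_ne_pair' i j this

lemma nMap_ne_sMap (hn : 2 ≤ n) (p q : Fin n) (σ : Equiv.Perm (Fin n)) (k l : Fin n)
    (α : Brandt n) : nMap p q σ ≠ sMap k l α := by
  intro h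
  have h0 : (0 : ℕ) < n := by omega
  have h1 : (1 : ℕ) < n := by omega
  set x0 : Fin n := ⟨0, h0⟩
  set x1 : Fin n := ⟨1, h1⟩
  have hne : x0 ≠ x1 := by
    intro hcon
    have := congrArg Fin.val hcon
    simp [x0, x1] at this
  -- pick x ∈ {x0, x1} with (x, p) ≠ (k, l)
  have key : ∀ x : Fin n, x ≠ k → False := by
    intro x hxk
    have := congrFun h (Brandt.pair x p)
    have hL : nMap p q σ (Brandt.pair x p) = Brandt.pair (σ x) q := by
      show nMap p q σ (some (x, p)) = _
      rw [nMap_apply_some, if_pos rfl]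
    have hR : sMap k l α (Brandt.pair x p) = Brandt.theta n := by
      rw [sMap_apply, if_neg (fun hcon => hxk (pair_inj hcon).1)]
    rw [hL, hR] at this
    exact pair_ne_theta _ _ this
  by_cases h0k : x0 = k
  · exact key x1 (fun hcon => hne (h0k.trans hcon.symm))
  · exact key x0 h0k

lemma xi_ne_sMap (hn : 2 ≤ n) (i j : Fin n) (k l : Fin n) (α : Brandt n) :
    xi (Brandt.pair i j) ≠ sMap k l α := by
  intro h
  have := congrFun h (Brandt.theta n)
  rw [xi_apply, sMap_apply, if_neg (theta_ne_pair' k l)] at this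
  exact pair_ne_theta i j this

lemma nMap_injective (hn : 1 ≤ n) {p q p' q' : Fin n} {σ σ' : Equiv.Perm (Fin n)}
    (h : nMap p q σ = nMap p' q' σ') : p = p' ∧ q = q' ∧ σ = σ' := by
  have hpp : p = p' := by
    by_contra hne
    have := congrFun h (Brandt.pair p p)
    have hL : nMap p q σ (Brandt.pair p p) = Brandt.pair (σ p) q := by
      show nMap p q σ (some (p, p)) = _
      rw [nMap_apply_some, if_pos rfl]
    have hR : nMap p' q' σ' (Brandt.pair p p) = Brandt.theta n := by
      show nMap p' q' σ' (some (p, p)) = _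
      rw [nMap_apply_some, if_neg hne]
    rw [hL, hR] at this
    exact pair_ne_theta _ _ this
  subst hpp
  have hval : ∀ x : Fin n, Brandt.pair (σ x) q = Brandt.pair (σ' x) q' := by
    intro x
    have := congrFun h (Brandt.pair x p)
    have hL : nMap p q σ (Brandt.pair x p) = Brandt.pair (σ x) q := by
      show nMap p q σ (some (x, p)) = _
      rw [nMap_apply_some, if_pos rfl]
    have hR : nMap p q' σ' (Brandt.pair x p) = Brandt.pair (σ' x) q' := by
      show nMap p q' σ' (some (x, p)) = _
      rw [nMap_apply_some, if_pos rfl]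
    rw [hL, hR] at this
    exact this
  have hq : q = q' := by
    have := pair_inj (hval ⟨0, by omega⟩)
    exact this.2
  have hσ : σ = σ' := by
    ext x
    exact congrArg Fin.val (pair_inj (hval x)).1
  exact ⟨rfl, hq, hσ⟩

/-- the diagonal automorphism attached to σ -/
def diag {n : ℕ} (σ : Equiv.Perm (Fin n)) : MB n := fun a =>
  Option.map (fun x : Fin n × Fin n => (σ x.1, σ x.2)) a

lemma diag_endo (σ : Equiv.Perm (Fin n)) : IsEndo (diag σ) := by
  rintro a b
  cases a with
  | none => rfl
  | some x =>
    obtain ⟨x1, x2⟩ := x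
    cases b with
    | none => rfl
    | some z =>
      obtain ⟨z1, z2⟩ := z
      show diag σ (Brandt.pair x1 x2 + Brandt.pair z1 z2) =
        Brandt.pair (σ x1) (σ x2) + Brandt.pair (σ z1) (σ z2)
      rw [pair_add_pair, pair_add_pair]
      by_cases hc : x2 = z1
      · rw [if_pos hc, if_pos (congrArg σ hc)]
        rfl
      · rw [if_neg hc, if_neg (fun hcon => hc (σ.injective hcon))]
        rfl

lemma xi_pair_diag_endo (i : Fin n) : IsEndo (xi (Brandt.pair i i) : MB n) := by
  intro a b
  rw [xi_apply, xi_apply, xi_apply, pair_add_pair, if_pos rfl]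

lemma xi_theta_endo : IsEndo (xi (Brandt.theta n) : MB n) := by
  intro a b
  rw [xi_apply, xi_apply, xi_apply, theta_add]

/-- L9 -/
lemma diag_add_xi (σ : Equiv.Perm (Fin n)) (p q : Fin n) :
    diag σ + xi (Brandt.pair p q) = nMap (σ.symm p) q σ := by
  funext a
  rw [mb_add_apply, xi_apply]
  cases a with
  | none => rw [nMap_apply_none]; exact theta_add _
  | some x =>
    rw [nMap_apply_some]
    show Brandt.pair (σ x.1) (σ x.2) + Brandt.pair p q = _
    rw [pair_add_pair]
    by_cases hc : σ x.2 = p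
    · rw [if_pos hc, if_pos (by rw [← hc]; simp)]
    · rw [if_neg hc, if_neg (fun hcon => hc (by rw [hcon]; simp))]

/-- classification of endomorphisms -/
lemma endo_classify {g : MB n} (hg : IsEndo g) :
    g = xi (Brandt.theta n) ∨ (∃ i, g = xi (Brandt.pair i i)) ∨
      (∃ σ : Equiv.Perm (Fin n), g = diag σ) := by
  rcases brandt_cases (g (Brandt.theta n)) with hθ | ⟨i, j, hθ⟩
  · -- g θ = θ
    by_cases hz : ∃ u v : Fin n, g (Brandt.pair u v) = Brandt.theta n
    · -- g kills a nonzero element, hence everything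
      left
      obtain ⟨u, v, huv⟩ := hz
      funext a
      rw [xi_apply]
      rcases brandt_cases a with rfl | ⟨x, z, rfl⟩
      · exact hθ
      · have h1 : Brandt.pair x z = Brandt.pair x u + (Brandt.pair u v + Brandt.pair v z) := by
          rw [pair_add_pair, if_pos rfl, pair_add_pair, if_pos rfl]
        rw [h1, hg, hg, huv, theta_add, add_theta]
    · -- g preserves nonzero elements
      push_neg at hz
      -- idempotents go to idempotents
      have hid : ∀ i : Fin n, ∃ t : Fin n, g (Brandt.pair i i) = Brandt.pair t t := by
        intro i
        rcases brandt_cases (g (Brandt.pair i i)) with hc | ⟨a, b, hc⟩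
        · exact absurd hc (hz i i)
        · have h1 : g (Brandt.pair i i) = g (Brandt.pair i i) + g (Brandt.pair i i) := by
            rw [← hg, pair_add_pair, if_pos rfl]
          rw [hc, pair_add_pair] at h1
          by_cases hab : b = a
          · subst hab
            exact ⟨b, by rw [hc]⟩
          · rw [if_neg hab] at h1
            exact absurd h1 (fun hh => pair_ne_theta a b hh)
      choose τ hτ using hid
      have hval : ∀ x z : Fin n, g (Brandt.pair x z) = Brandt.pair (τ x) (τ z) := by
        intro x z
        rcases brandt_cases (g (Brandt.pair x z)) with hc | ⟨a, b, hc⟩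
        · exact absurd hc (hz x z)
        · have h1 : g (Brandt.pair x z) = g (Brandt.pair x x) + g (Brandt.pair x z) := by
            rw [← hg, pair_add_pair, if_pos rfl]
          have h2 : g (Brandt.pair x z) = g (Brandt.pair x z) + g (Brandt.pair z z) := by
            rw [← hg, pair_add_pair, if_pos rfl]
          rw [hc, hτ x, pair_add_pair] at h1
          rw [hc, hτ z, pair_add_pair] at h2
          by_cases ha : τ x = a
          · by_cases hb : b = τ z
            · rw [hc, ha, hb]
            · rw [if_neg hb] at h2
              exact absurd h2 (pair_ne_theta a b)
          · rw [if_neg ha] at h1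
            exact absurd h1 (pair_ne_theta a b)
      -- τ is injective
      have hτinj : Function.Injective τ := by
        intro x z hxz
        by_contra hne
        have hsum : Brandt.pair x x + Brandt.pair z z = Brandt.theta n := by
          rw [pair_add_pair, if_neg hne]
        have h1 := hg (Brandt.pair x x) (Brandt.pair z z)
        rw [hsum, hθ, hτ x, hτ z, pair_add_pair, if_pos hxz] at h1
        exact theta_ne_pair' _ _ h1
      right; right
      exact ⟨Equiv.ofBijective τ (Finite.injective_iff_bijective.mp hτinj), by
        funext a
        rcases brandt_cases a with rfl | ⟨x, z, rfl⟩
        · exact hθ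
        · rw [hval]
          rfl⟩
  · -- g θ is an idempotent pair (i,i)... first, θ+θ = θ forces structure
    have h1 : g (Brandt.theta n) = g (Brandt.theta n) + g (Brandt.theta n) := by
      rw [← hg, theta_add]
    rw [hθ, pair_add_pair] at h1
    have hij : j = i := by
      by_cases hc : j = i
      · exact hc
      · rw [if_neg hc] at h1
        exact absurd h1 (fun hh => pair_ne_theta i j hh)
    subst hij
    right; left
    refine ⟨j, ?_⟩
    funext a
    rw [xi_apply]
    have h2 : Brandt.pair j j = g a + Brandt.pair j j := by
      have h5 := hg a (Brandt.theta n)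
      rw [add_theta, hθ] at h5
      exact h5
    rcases brandt_cases (g a) with hga | ⟨x, z, hga⟩
    · rw [hga, theta_add] at h2
      exact absurd h2 (pair_ne_theta j j)
    · rw [hga, pair_add_pair] at h2
      by_cases hz : z = j
      · rw [if_pos hz] at h2
        obtain ⟨hx, -⟩ := pair_inj h2.symm
        rw [hga, hx, hz]
      · rw [if_neg hz] at h2
        exact absurd h2 (pair_ne_theta j j)

end Classify

section AplusClassify

variable {n : ℕ}

lemma affine_classify {f : MB n} (hf : IsAffine f) :
    (∃ c, f = xi c) ∨ IsN f := by
  obtain ⟨g, c, hg, rfl⟩ := hf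
  rcases endo_classify hg with rfl | ⟨i, rfl⟩ | ⟨σ, rfl⟩
  · left; exact ⟨Brandt.theta n, xi_theta_add _⟩
  · left; exact ⟨Brandt.pair i i + c, xi_add_xi _ _⟩
  · rcases brandt_cases c with rfl | ⟨p, q, rfl⟩
    · left; exact ⟨Brandt.theta n, add_xi_theta _⟩
    · right; exact ⟨σ.symm p, q, σ, diag_add_xi σ p q⟩

lemma affine_of_xi (c : Brandt n) : IsAffine (xi c : MB n) := by
  rcases brandt_cases c with rfl | ⟨p, q, rfl⟩
  · exact ⟨xi (Brandt.theta n), Brandt.theta n, xi_theta_endo, (xi_theta_add _).symm⟩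
  · refine ⟨xi (Brandt.pair p p), Brandt.pair p q, xi_pair_diag_endo p, ?_⟩
    rw [xi_add_xi, pair_add_pair, if_pos rfl]

lemma affine_of_nMap (p q : Fin n) (σ : Equiv.Perm (Fin n)) : IsAffine (nMap p q σ) := by
  refine ⟨diag σ, Brandt.pair (σ p) q, diag_endo σ, ?_⟩
  rw [diag_add_xi]
  congr 1
  simp

/-- the sum table: CNS is closed under addition, and a sum is an n-map only if the
first summand is an n-map with the same (p, σ) and the second is a constant. -/
lemma CNS_add {f g : MB n} (hn : 2 ≤ n) (hf : CNS f) (hg : CNS g) : CNS (f + g) := by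
  rcases hg with ⟨i, j, rfl⟩ | ⟨p, q, σ, rfl⟩ | ⟨k, l, α, rfl⟩
  · -- g is a nonzero constant
    rcases hf with ⟨i', j', rfl⟩ | ⟨p', q', σ', rfl⟩ | ⟨k', l', α', rfl⟩
    · rw [xi_add_xi]
      rcases brandt_cases (Brandt.pair i' j' + Brandt.pair i j) with hc | ⟨a, b, hc⟩
      · rw [hc]; right; right; exact ⟨i, i, Brandt.theta n, (sMap_theta i i).symm⟩
      · rw [hc]; left; exact ⟨a, b, rfl⟩
    · rw [nMap_add_xi]
      by_cases hq : q' = i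
      · rw [if_pos hq]; right; left; exact ⟨p', j, σ', rfl⟩
      · rw [if_neg hq]; right; right; exact ⟨i, i, Brandt.theta n, (sMap_theta i i).symm⟩
    · rw [sMap_add]; right; right; exact ⟨k', l', _, rfl⟩
  · -- g is an n-map
    rcases hf with ⟨i', j', rfl⟩ | ⟨p', q', σ', rfl⟩ | ⟨k', l', α', rfl⟩
    · rw [xi_add_nMap]; right; right; exact ⟨_, _, _, rfl⟩
    · obtain ⟨k, l, α, hkla⟩ := nMap_add_nMap p' q' σ' p q σ
      rw [hkla]; right; right; exact ⟨k, l, α, rfl⟩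
    · rw [sMap_add]; right; right; exact ⟨k', l', _, rfl⟩
  · rw [add_sMap]; right; right; exact ⟨k, l, _, rfl⟩

lemma CNS_mem_closure (hn : 2 ≤ n) {f : MB n} (hf : CNS f) :
    f ∈ Aplus n := by
  have haff : ∀ h : MB n, IsAffine h → h ∈ Aplus n := fun h hh =>
    AddSubsemigroup.subset_closure hh
  rcases hf with ⟨i, j, rfl⟩ | ⟨p, q, σ, rfl⟩ | ⟨k, l, α, rfl⟩
  · exact haff _ (affine_of_xi _)
  · exact haff _ (affine_of_nMap p q σ)
  · rcases brandt_cases α with rfl | ⟨r, q, rfl⟩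
    · -- sMap k l θ = xi θ
      rw [sMap_theta]
      exact haff _ (affine_of_xi _)
    · -- sMap k l (r,q) = xi (r,k) + nMap l q 1
      have h1 : sMap k l (Brandt.pair r q) = xi (Brandt.pair r k) + nMap l q 1 := by
        rw [xi_add_nMap]
        congr 1
      rw [h1]
      exact AddSubsemigroup.add_mem _ (haff _ (affine_of_xi _)) (haff _ (affine_of_nMap _ _ _))

lemma mem_Aplus_iff (hn : 2 ≤ n) (f : MB n) : f ∈ AplusSet n ↔ CNS f := by
  constructor
  · intro hf
    induction hf using AddSubsemigroup.closure_induction with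
    | mem x hx =>
      rcases affine_classify hx with ⟨c, rfl⟩ | hN
      · rcases brandt_cases c with rfl | ⟨i, j, rfl⟩
        · right; right
          refine ⟨⟨0, by omega⟩, ⟨0, by omega⟩, Brandt.theta n, (sMap_theta _ _).symm⟩
        · left; exact ⟨i, j, rfl⟩
      · right; left; exact hN
    | add x y hx hy ihx ihy => exact CNS_add hn ihx ihy
  · exact CNS_mem_closure hn

end AplusClassify

section Structure

variable {n : ℕ}

lemma closure_CNS (hn : 2 ≤ n) {V : Set (MB n)} (hV : V ⊆ {f | CNS f}) :
    (AddSubsemigroup.closure V : Set (MB n)) ⊆ {f | CNS f} := by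
  intro f hf
  induction hf using AddSubsemigroup.closure_induction with
  | mem x hx => exact hV hx
  | add x y hx hy ihx ihy => exact CNS_add hn ihx ihy

/-- constants in a closure come from constant generators -/
lemma const_in_closure (hn : 2 ≤ n) {V : Set (MB n)} (hV : V ⊆ {f | CNS f}) {f : MB n}
    (hf : f ∈ AddSubsemigroup.closure V) (hθ : f (Brandt.theta n) ≠ Brandt.theta n) :
    f ∈ AddSubsemigroup.closure {g | g ∈ V ∧ IsC g} := by
  induction hf using AddSubsemigroup.closure_induction with
  | mem x hx =>
    refine AddSubsemigroup.subset_closure ⟨hx, ?_⟩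
    rcases hV hx with hC | ⟨p, q, σ, rfl⟩ | ⟨k, l, α, rfl⟩
    · exact hC
    · exact absurd (nMap_apply_theta p q σ) hθ
    · exact absurd (by rw [sMap_apply, if_neg (theta_ne_pair' k l)]) hθ
  | add x y hx hy ihx ihy =>
    have h1 : x (Brandt.theta n) + y (Brandt.theta n) ≠ Brandt.theta n := hθ
    obtain ⟨hx1, hy1⟩ := add_ne_theta h1
    exact AddSubsemigroup.add_mem _ (ihx hx1) (ihy hy1)

/-- n-maps in a closure come from n-map generators with the same (p, σ) -/
lemma nmap_in_closure (hn : 2 ≤ n) {V : Set (MB n)} (hV : V ⊆ {f | CNS f}) {f : MB n}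
    (hf : f ∈ AddSubsemigroup.closure V) :
    ∀ p q σ, f = nMap p q σ → ∃ q', nMap p q' σ ∈ V := by
  induction hf using AddSubsemigroup.closure_induction with
  | mem x hx =>
    rintro p q σ rfl
    exact ⟨q, hx⟩
  | add x y hx hy ihx ihy =>
    rintro p q σ hsum
    have hcx : CNS x := closure_CNS hn hV hx
    have hcy : CNS y := closure_CNS hn hV hy
    rcases hcx with ⟨i', j', rfl⟩ | ⟨p', q', σ', hxn⟩ | ⟨k', l', α', rfl⟩
    · -- x const
      rcases hcy with ⟨i, j, rfl⟩ | ⟨p2, q2, σ2, rfl⟩ | ⟨k, l, α, rfl⟩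
      · rw [xi_add_xi] at hsum
        exact absurd hsum.symm (nMap_ne_xi hn p q σ _)
      · rw [xi_add_nMap] at hsum
        exact absurd hsum.symm (nMap_ne_sMap hn p q σ _ _ _)
      · rw [add_sMap] at hsum
        exact absurd hsum.symm (nMap_ne_sMap hn p q σ _ _ _)
    · -- x n-map
      subst hxn
      rcases hcy with ⟨i, j, rfl⟩ | ⟨p2, q2, σ2, rfl⟩ | ⟨k, l, α, rfl⟩
      · rw [nMap_add_xi] at hsum
        by_cases hq : q' = i
        · rw [if_pos hq] at hsum
          obtain ⟨hp, hqq, hσ⟩ := nMap_injective (by omega) hsum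
          subst hp; subst hσ
          exact ihx p' q' σ' rfl
        · rw [if_neg hq] at hsum
          exact absurd hsum.symm (nMap_ne_xi hn p q σ _)
      · obtain ⟨k, l, α, hkla⟩ := nMap_add_nMap p' q' σ' p2 q2 σ2
        rw [hkla] at hsum
        exact absurd hsum.symm (nMap_ne_sMap hn p q σ _ _ _)
      · rw [add_sMap] at hsum
        exact absurd hsum.symm (nMap_ne_sMap hn p q σ _ _ _)
    · rw [sMap_add] at hsum
      exact absurd hsum.symm (nMap_ne_sMap hn p q σ _ _ _)

/-- image of an edge set as constant maps -/
def xiPairs (n : ℕ) (A : Set (Fin n × Fin n)) : Set (MB n) :=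
  {f | ∃ e ∈ A, f = xi (Brandt.pair e.1 e.2)}

lemma tc_fwd {A : Set (Fin n × Fin n)} {i j : Fin n}
    (h : Relation.TransGen (fun a b => (a, b) ∈ A) i j) :
    xi (Brandt.pair i j) ∈ AddSubsemigroup.closure (xiPairs n A) := by
  induction h with
  | single h => exact AddSubsemigroup.subset_closure ⟨(i, _), h, rfl⟩
  | @tail b c hib hbc ih =>
    have heq : xi (Brandt.pair i c) = xi (Brandt.pair i b) + xi (Brandt.pair b c) := by
      rw [xi_add_xi, pair_add_pair, if_pos rfl]
    rw [heq]
    exact AddSubsemigroup.add_mem _ ih (AddSubsemigroup.subset_closure ⟨(b, c), hbc, rfl⟩)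

lemma tc_bwd {A : Set (Fin n × Fin n)} {f : MB n}
    (hf : f ∈ AddSubsemigroup.closure (xiPairs n A)) :
    (∃ c, f = xi c) ∧
      ∀ i j, f = xi (Brandt.pair i j) → Relation.TransGen (fun a b => (a, b) ∈ A) i j := by
  induction hf using AddSubsemigroup.closure_induction with
  | mem x hx =>
    obtain ⟨e, he, rfl⟩ := hx
    refine ⟨⟨_, rfl⟩, ?_⟩
    intro i j h
    obtain ⟨h1, h2⟩ := pair_inj (xi_injective h)
    rw [← h1, ← h2]
    exact Relation.TransGen.single he
  | add x y hx hy ihx ihy =>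
    obtain ⟨⟨a, rfl⟩, iha⟩ := ihx
    obtain ⟨⟨b, rfl⟩, ihb⟩ := ihy
    rw [xi_add_xi]
    refine ⟨⟨a + b, rfl⟩, ?_⟩
    intro i j h
    have hab : a + b = Brandt.pair i j := xi_injective h
    obtain ⟨k, hk1, hk2⟩ := eq_pair_of_add hab
    exact (iha i k (by rw [hk1])).trans (ihb k j (by rw [hk2]))

end Structure

section PathGraph

open Relation

variable {n : ℕ}

/-- edges of the two-way path on [n] -/
def pathE (n : ℕ) : Set (Fin n × Fin n) :=
  {e | e.2.val = e.1.val + 1 ∨ e.1.val = e.2.val + 1}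

lemma path_up {i j : Fin n} (h : i.val < j.val) :
    TransGen (fun a b => (a, b) ∈ pathE n) i j := by
  have key : ∀ d : ℕ, ∀ i j : Fin n, j.val = i.val + d + 1 →
      TransGen (fun a b => (a, b) ∈ pathE n) i j := by
    intro d
    induction d with
    | zero =>
      intro i j hj
      exact TransGen.single (Or.inl (show j.val = i.val + 1 by omega))
    | succ d ih =>
      intro i j hj
      have hmid : i.val + 1 < n := by
        have := j.isLt; omega
      set m : Fin n := ⟨i.val + 1, hmid⟩
      have h1 : TransGen (fun a b => (a, b) ∈ pathE n) i m :=
        TransGen.single (Or.inl rfl)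
      exact h1.trans (ih m j (by simp [m]; omega))
  exact key (j.val - i.val - 1) i j (by omega)

lemma path_down {i j : Fin n} (h : j.val < i.val) :
    TransGen (fun a b => (a, b) ∈ pathE n) i j := by
  have key : ∀ d : ℕ, ∀ i j : Fin n, i.val = j.val + d + 1 →
      TransGen (fun a b => (a, b) ∈ pathE n) i j := by
    intro d
    induction d with
    | zero =>
      intro i j hj
      exact TransGen.single (Or.inr (show i.val = j.val + 1 by omega))
    | succ d ih =>
      intro i j hj
      have hmid : i.val - 1 < n := by
        have := i.isLt; omega
      set m : Fin n := ⟨i.val - 1, hmid⟩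
      have h1 : TransGen (fun a b => (a, b) ∈ pathE n) i m :=
        TransGen.single (Or.inr (by simp [m]; omega))
      exact h1.trans (ih m j (by simp [m]; omega))
  exact key (i.val - j.val - 1) i j (by omega)

lemma path_gen (hn : 2 ≤ n) (i j : Fin n) :
    TransGen (fun a b => (a, b) ∈ pathE n) i j := by
  rcases lt_trichotomy i.val j.val with h | h | h
  · exact path_up h
  · -- i = j : go to a neighbour and back
    have hij : i = j := Fin.ext h
    subst hij
    by_cases hup : i.val + 1 < n
    · exact (path_up (show i.val < (⟨i.val + 1, hup⟩ : Fin n).val by simp)).trans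
        (path_down (show i.val < i.val + 1 by omega))
    · have h1 : 0 < i.val := by have := i.isLt; omega
      have hdn : i.val - 1 < n := by omega
      exact (path_down (show (⟨i.val - 1, hdn⟩ : Fin n).val < i.val by simpa using h1)).trans
        (path_up (by simpa using h1))
  · exact path_down h

lemma mem_pathE_iff (a b : Fin n) :
    ((a, b) ∈ pathE n) ↔ (b.val = a.val + 1 ∨ a.val = b.val + 1) := Iff.rfl

lemma path_indep {e : Fin n × Fin n} (he : e ∈ pathE n) :
    ¬ TransGen (fun a b => (a, b) ∈ pathE n ∧ ¬(a = e.1 ∧ b = e.2)) e.1 e.2 := by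
  obtain ⟨e1, e2⟩ := e
  rw [mem_pathE_iff] at he
  rcases he with hup | hdn
  · intro hTG
    have inv : ∀ x y : Fin n,
        TransGen (fun a b => (a, b) ∈ pathE n ∧ ¬(a = e1 ∧ b = e2)) x y →
        x.val ≤ e1.val → y.val ≤ e1.val := by
      intro x y hxy
      induction hxy with
      | @single y h =>
        intro hx
        obtain ⟨hedge, hne⟩ := h
        rw [mem_pathE_iff] at hedge
        rcases hedge with h1 | h1
        · rcases Nat.lt_or_ge x.val e1.val with h2 | h2
          · omega
          · exfalso
            have hxe : x = e1 := Fin.ext (by omega)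
            subst hxe
            exact hne ⟨rfl, (Fin.ext (by omega) : y = e2)⟩
        · omega
      | @tail b c hxb hbc ih =>
        intro hx
        have hb := ih hx
        obtain ⟨hedge, hne⟩ := hbc
        rw [mem_pathE_iff] at hedge
        rcases hedge with h1 | h1
        · rcases Nat.lt_or_ge b.val e1.val with h2 | h2
          · omega
          · exfalso
            have hbe : b = e1 := Fin.ext (by omega)
            subst hbe
            exact hne ⟨rfl, (Fin.ext (by omega) : c = e2)⟩
        · omega
    have hfin : e2.val ≤ e1.val := inv e1 e2 hTG (le_refl _)
    omega
  · intro hTG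
    have inv : ∀ x y : Fin n,
        TransGen (fun a b => (a, b) ∈ pathE n ∧ ¬(a = e1 ∧ b = e2)) x y →
        e1.val ≤ x.val → e1.val ≤ y.val := by
      intro x y hxy
      induction hxy with
      | @single y h =>
        intro hx
        obtain ⟨hedge, hne⟩ := h
        rw [mem_pathE_iff] at hedge
        rcases hedge with h1 | h1
        · omega
        · rcases Nat.lt_or_ge e1.val x.val with h2 | h2
          · omega
          · exfalso
            have hxe : x = e1 := Fin.ext (by omega)
            subst hxe
            exact hne ⟨rfl, (Fin.ext (by omega) : y = e2)⟩
      | @tail b c hxb hbc ih =>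
        intro hx
        have hb := ih hx
        obtain ⟨hedge, hne⟩ := hbc
        rw [mem_pathE_iff] at hedge
        rcases hedge with h1 | h1
        · omega
        · rcases Nat.lt_or_ge e1.val b.val with h2 | h2
          · omega
          · exfalso
            have hbe : b = e1 := Fin.ext (by omega)
            subst hbe
            exact hne ⟨rfl, (Fin.ext (by omega) : c = e2)⟩
    have hfin : e1.val ≤ e2.val := inv e1 e2 hTG (le_refl _)
    omega

lemma pathE_card (hn : 2 ≤ n) : (pathE n).ncard = 2 * n - 2 := by
  classical
  set up : Set (Fin n × Fin n) := {e | e.2.val = e.1.val + 1} with hup_def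
  set dn : Set (Fin n × Fin n) := {e | e.1.val = e.2.val + 1} with hdn_def
  have hsplit : pathE n = up ∪ dn := rfl
  have hdisj : Disjoint up dn := by
    rw [Set.disjoint_left]
    rintro e h1 h2
    simp only [hup_def, hdn_def, Set.mem_setOf_eq] at h1 h2
    omega
  have hupcard : up.ncard = n - 1 := by
    have hbij : up = (fun k : Fin (n - 1) =>
        ((⟨k.val, by omega⟩ : Fin n), (⟨k.val + 1, by have := k.isLt; omega⟩ : Fin n))) '' Set.univ := by
      ext e
      simp only [Set.image_univ, Set.mem_range, hup_def, Set.mem_setOf_eq]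
      constructor
      · intro h
        have h1 : e.1.val < n - 1 := by have := e.2.isLt; omega
        refine ⟨⟨e.1.val, h1⟩, ?_⟩
        ext : 1
        · exact Fin.ext rfl
        · exact Fin.ext (by simpa using h.symm)
      · rintro ⟨k, rfl⟩
        rfl
    rw [hbij, Set.ncard_image_of_injective _ ?_, Set.ncard_univ, Nat.card_eq_fintype_card,
      Fintype.card_fin]
    intro a b hab
    simp only [Prod.mk.injEq] at hab
    exact Fin.ext (congrArg Fin.val hab.1 : _)
  have hdncard : dn.ncard = n - 1 := by
    have hbij : dn = (fun k : Fin (n - 1) =>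
        ((⟨k.val + 1, by have := k.isLt; omega⟩ : Fin n), (⟨k.val, by omega⟩ : Fin n))) '' Set.univ := by
      ext e
      simp only [Set.image_univ, Set.mem_range, hdn_def, Set.mem_setOf_eq]
      constructor
      · intro h
        have h1 : e.2.val < n - 1 := by have := e.1.isLt; omega
        refine ⟨⟨e.2.val, h1⟩, ?_⟩
        ext : 1
        · exact Fin.ext (by simpa using h.symm)
        · exact Fin.ext rfl
      · rintro ⟨k, rfl⟩
        rfl
    rw [hbij, Set.ncard_image_of_injective _ ?_, Set.ncard_univ, Nat.card_eq_fintype_card,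
      Fintype.card_fin]
    intro a b hab
    simp only [Prod.mk.injEq] at hab
    exact Fin.ext (congrArg Fin.val hab.2 : _)
  rw [hsplit, Set.ncard_union_eq hdisj (Set.toFinite _) (Set.toFinite _), hupcard, hdncard]
  omega

end PathGraph

section Final

open Relation

variable {n : ℕ}

lemma xiPairs_eq_image (A : Set (Fin n × Fin n)) :
    xiPairs n A = (fun e : Fin n × Fin n => xi (Brandt.pair e.1 e.2)) '' A := by
  ext f
  constructor
  · rintro ⟨e, he, rfl⟩; exact ⟨e, he, rfl⟩
  · rintro ⟨e, he, rfl⟩; exact ⟨e, he, rfl⟩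

lemma xiPair_inj : Function.Injective (fun e : Fin n × Fin n => xi (Brandt.pair e.1 e.2)) := by
  intro e e' h
  obtain ⟨h1, h2⟩ := pair_inj (xi_injective h)
  exact Prod.ext h1 h2

lemma xiPairs_ncard (A : Set (Fin n × Fin n)) : (xiPairs n A).ncard = A.ncard := by
  rw [xiPairs_eq_image, Set.ncard_image_of_injective _ xiPair_inj]

lemma card_nmap_pairs : Nat.card (Fin n × Equiv.Perm (Fin n)) = n * n.factorial := by
  rw [Nat.card_eq_fintype_card, Fintype.card_prod, Fintype.card_fin, Fintype.card_perm,
    Fintype.card_fin]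

theorem stmt_9' (n : ℕ) (hn : 2 ≤ n) :
    IsGreatest {m : ℕ | ∃ U : Set (MB n), U ⊆ AplusSet n ∧
      (AddSubsemigroup.closure U : Set (MB n)) = AplusSet n ∧
      IndepSet U ∧ U.ncard = m}
      (n * n.factorial + 2 * n - 2) := by
  classical
  have h0 : (0 : ℕ) < n := by omega
  have h1 : (1 : ℕ) < n := by omega
  set z0 : Fin n := ⟨0, h0⟩ with hz0
  set z1 : Fin n := ⟨1, h1⟩ with hz1
  have hz01 : z1 ≠ z0 := by
    intro h; exact absurd (congrArg Fin.val h) (by simp [hz0, hz1])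
  have hxiθ : xi (Brandt.theta n) = xi (Brandt.pair z0 z1) + xi (Brandt.pair z0 z1) := by
    rw [xi_add_xi, pair_add_pair, if_neg hz01]
  have hsmap_split : ∀ (k l r q : Fin n),
      sMap k l (Brandt.pair r q) = xi (Brandt.pair r k) + nMap l q 1 := by
    intro k l r q
    rw [xi_add_nMap]
    congr 1
  constructor
  · -- MEMBERSHIP : the witness set U₀
    set N0 : Set (MB n) := {f | ∃ p σ, f = nMap p z0 σ} with hN0
    set U₀ : Set (MB n) := xiPairs n (pathE n) ∪ N0 with hU₀
    have hU₀CNS : U₀ ⊆ {f | CNS f} := by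
      rintro f (⟨e, he, rfl⟩ | ⟨p, σ, rfl⟩)
      · exact Or.inl ⟨e.1, e.2, rfl⟩
      · exact Or.inr (Or.inl ⟨p, z0, σ, rfl⟩)
    have hU₀sub : U₀ ⊆ AplusSet n := fun f hf => (mem_Aplus_iff hn f).mpr (hU₀CNS hf)
    have hconst : ∀ c : Brandt n, xi c ∈ AddSubsemigroup.closure U₀ := by
      intro c
      have hp : ∀ i j : Fin n, xi (Brandt.pair i j) ∈ AddSubsemigroup.closure U₀ := by
        intro i j
        exact AddSubsemigroup.closure_mono Set.subset_union_left (tc_fwd (path_gen hn i j))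
      rcases brandt_cases c with rfl | ⟨i, j, rfl⟩
      · rw [hxiθ]
        exact AddSubsemigroup.add_mem _ (hp z0 z1) (hp z0 z1)
      · exact hp i j
    have hnm : ∀ (p q : Fin n) (σ : Equiv.Perm (Fin n)),
        nMap p q σ ∈ AddSubsemigroup.closure U₀ := by
      intro p q σ
      have heq : nMap p z0 σ + xi (Brandt.pair z0 q) = nMap p q σ := by
        rw [nMap_add_xi, if_pos rfl]
      rw [← heq]
      exact AddSubsemigroup.add_mem _
        (AddSubsemigroup.subset_closure (Or.inr ⟨p, σ, rfl⟩)) (hconst _)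
    have hCNSin : ∀ f : MB n, CNS f → f ∈ AddSubsemigroup.closure U₀ := by
      rintro f (⟨i, j, rfl⟩ | ⟨p, q, σ, rfl⟩ | ⟨k, l, α, rfl⟩)
      · exact hconst _
      · exact hnm p q σ
      · rcases brandt_cases α with rfl | ⟨r, q, rfl⟩
        · rw [sMap_theta]; exact hconst _
        · rw [hsmap_split]
          exact AddSubsemigroup.add_mem _ (hconst _) (hnm l q 1)
    have hgen : (AddSubsemigroup.closure U₀ : Set (MB n)) = AplusSet n := by
      have hle : AddSubsemigroup.closure U₀ ≤ Aplus n :=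
        AddSubsemigroup.closure_le.mpr hU₀sub
      have hge : Aplus n ≤ AddSubsemigroup.closure U₀ :=
        AddSubsemigroup.closure_le.mpr (fun f hf =>
          hCNSin f ((mem_Aplus_iff hn f).mp (AddSubsemigroup.subset_closure hf)))
      exact congrArg (fun S : AddSubsemigroup (MB n) => (S : Set (MB n))) (le_antisymm hle hge)
    have hindep : IndepSet U₀ := by
      rintro a ha hmem
      rcases ha with ⟨e, he, rfl⟩ | ⟨p, σ, rfl⟩
      · -- a = xi (pair e1 e2)
        obtain ⟨e1, e2⟩ := e
        have hV : U₀ \ {xi (Brandt.pair e1 e2)} ⊆ {f | CNS f} :=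
          fun f hf => hU₀CNS hf.1
        have hc := const_in_closure hn hV hmem (by
          rw [xi_apply]; exact pair_ne_theta e1 e2)
        have hsub : {g | g ∈ U₀ \ {xi (Brandt.pair e1 e2)} ∧ IsC g} ⊆
            xiPairs n (pathE n \ {(e1, e2)}) := by
          rintro g ⟨⟨hg, hgne⟩, hC⟩
          rcases hg with ⟨e', he', rfl⟩ | ⟨p, σ, rfl⟩
          · refine ⟨e', ⟨he', ?_⟩, rfl⟩
            intro hcon
            exact hgne (by rw [Set.mem_singleton_iff, hcon])
          · obtain ⟨i, j, hij⟩ := hC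
            exact absurd hij (nMap_ne_xi hn p z0 σ _)
        have hc2 := AddSubsemigroup.closure_mono hsub hc
        have hTG := (tc_bwd hc2).2 e1 e2 rfl
        refine path_indep he (TransGen.mono ?_ _ _ hTG)
        rintro x y ⟨hxy, hne⟩
        refine ⟨hxy, ?_⟩
        rintro ⟨rfl, rfl⟩
        exact hne rfl
      · -- a = nMap p z0 σ
        have hV : U₀ \ {nMap p z0 σ} ⊆ {f | CNS f} := fun f hf => hU₀CNS hf.1
        obtain ⟨q', hq'⟩ := nmap_in_closure hn hV hmem p z0 σ rfl
        obtain ⟨hq'U, hq'ne⟩ := hq'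
        rcases hq'U with ⟨e', he', hcon⟩ | ⟨p', σ', hcon⟩
        · exact nMap_ne_xi hn p q' σ _ hcon
        · obtain ⟨hp, hq, hσ⟩ := nMap_injective (by omega) hcon
          exact hq'ne (by rw [Set.mem_singleton_iff, hcon, ← hp, ← hσ])
    -- cardinality of U₀
    have hdisj : Disjoint (xiPairs n (pathE n)) N0 := by
      rw [Set.disjoint_left]
      rintro f ⟨e, he, rfl⟩ ⟨p, σ, hcon⟩
      exact nMap_ne_xi hn p z0 σ _ hcon.symm
    have hN0card : N0.ncard = n * n.factorial := by
      have him : N0 = (fun pσ : Fin n × Equiv.Perm (Fin n) =>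
          nMap pσ.1 z0 pσ.2) '' Set.univ := by
        ext f
        simp only [Set.image_univ, Set.mem_range, hN0, Set.mem_setOf_eq]
        constructor
        · rintro ⟨p, σ, rfl⟩; exact ⟨(p, σ), rfl⟩
        · rintro ⟨⟨p, σ⟩, rfl⟩; exact ⟨p, σ, rfl⟩
      rw [him, Set.ncard_image_of_injective _ ?_, Set.ncard_univ, card_nmap_pairs]
      intro pσ pσ' hcon
      obtain ⟨hp, -, hσ⟩ := nMap_injective (by omega) hcon
      exact Prod.ext hp hσ
    have hcard : U₀.ncard = n * n.factorial + 2 * n - 2 := by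
      rw [hU₀, Set.ncard_union_eq hdisj (Set.toFinite _) (Set.toFinite _),
        xiPairs_ncard, pathE_card hn, hN0card]
      have : 1 ≤ n * n.factorial := by
        have := Nat.factorial_pos n
        have : 1 ≤ n.factorial := this
        calc 1 ≤ n := by omega
        _ ≤ n * n.factorial := Nat.le_mul_of_pos_right n (Nat.factorial_pos n)
      omega
    exact ⟨U₀, hU₀sub, hgen, hindep, hcard⟩
  · -- UPPER BOUND
    rintro m ⟨U, hUsub, hUgen, hUind, rfl⟩
    have hUCNS : U ⊆ {f | CNS f} := fun f hf => (mem_Aplus_iff hn f).mp (hUsub hf)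
    have hUcl : ∀ f : MB n, CNS f → f ∈ AddSubsemigroup.closure U := by
      intro f hf
      have : f ∈ AplusSet n := (mem_Aplus_iff hn f).mpr hf
      rw [← hUgen] at this
      exact this
    set UC : Set (MB n) := {g | g ∈ U ∧ IsC g} with hUC
    set UN : Set (MB n) := {g | g ∈ U ∧ IsN g} with hUN
    set AU : Set (Fin n × Fin n) := {e | xi (Brandt.pair e.1 e.2) ∈ U} with hAU
    have hUCeq : UC = xiPairs n AU := by
      ext f
      constructor
      · rintro ⟨hf, i, j, rfl⟩; exact ⟨(i, j), hf, rfl⟩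
      · rintro ⟨e, he, rfl⟩; exact ⟨he, e.1, e.2, rfl⟩
    -- all constants lie in the closure of UC
    have hallC : ∀ c : Brandt n, xi c ∈ AddSubsemigroup.closure UC := by
      intro c
      have hp : ∀ i j : Fin n, xi (Brandt.pair i j) ∈ AddSubsemigroup.closure UC := by
        intro i j
        exact const_in_closure hn hUCNS (hUcl _ (Or.inl ⟨i, j, rfl⟩))
          (by rw [xi_apply]; exact pair_ne_theta i j)
      rcases brandt_cases c with rfl | ⟨i, j, rfl⟩
      · rw [hxiθ]; exact AddSubsemigroup.add_mem _ (hp z0 z1) (hp z0 z1)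
      · exact hp i j
    -- strong connectivity of AU
    have hTGall : ∀ i j : Fin n, TransGen (fun a b => (a, b) ∈ AU) i j := by
      intro i j
      have := hallC (Brandt.pair i j)
      rw [hUCeq] at this
      exact (tc_bwd this).2 i j rfl
    -- independence of AU edges
    have hIedge : ∀ i j : Fin n, (i, j) ∈ AU →
        ¬ TransGen (fun a b => (a, b) ∈ AU ∧ ¬(a = i ∧ b = j)) i j := by
      intro i j hij hTG
      have hTG' : TransGen (fun a b => (a, b) ∈ AU \ {(i, j)}) i j := by
        refine TransGen.mono ?_ _ _ hTG
        rintro x y ⟨hxy, hne⟩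
        refine ⟨hxy, ?_⟩
        intro hcon
        rw [Set.mem_singleton_iff, Prod.ext_iff] at hcon
        exact hne hcon
      have hmem := tc_fwd (A := AU \ {(i, j)}) hTG'
      have hsub : xiPairs n (AU \ {(i, j)}) ⊆ U \ {xi (Brandt.pair i j)} := by
        rintro g ⟨e, ⟨he, hene⟩, rfl⟩
        refine ⟨he, ?_⟩
        intro hcon
        rw [Set.mem_singleton_iff] at hcon
        obtain ⟨hh1, hh2⟩ := pair_inj (xi_injective hcon)
        exact hene (by rw [Set.mem_singleton_iff, Prod.ext_iff]; exact ⟨hh1, hh2⟩)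
      exact hUind _ hij (AddSubsemigroup.closure_mono hsub hmem)
    -- no loops
    have hLoop : ∀ i : Fin n, (i, i) ∉ AU := by
      intro i hii
      set j : Fin n := if i = z0 then z1 else z0 with hj
      have hij : i ≠ j := by
        rw [hj]
        split_ifs with h
        · rw [h]; exact fun hc => hz01 hc.symm
        · exact h
      have T1 := deloop (hTGall i j) hij
      have T2 := deloop (hTGall j i) (Ne.symm hij)
      have hmono : ∀ x y : Fin n, ((x, y) ∈ AU ∧ x ≠ y) →
          ((x, y) ∈ AU ∧ ¬(x = i ∧ y = i)) := by
        rintro x y ⟨hxy, hne⟩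
        exact ⟨hxy, fun ⟨ha, hb⟩ => hne (ha.trans hb.symm)⟩
      exact hIedge i i hii ((TransGen.mono hmono _ _ T1).trans (TransGen.mono hmono _ _ T2))
    -- apply the graph bound
    have hAUcard : AU.ncard ≤ 2 * n - 2 := by
      have hb := graph_bound n (Fin n) inferInstance (fun a b => (a, b) ∈ AU)
        (by rw [Nat.card_eq_fintype_card, Fintype.card_fin])
        hLoop (fun i j _ => hTGall i j) hIedge
      rw [Nat.card_eq_fintype_card, Fintype.card_fin] at hb
      have hset : {e : Fin n × Fin n | (e.1, e.2) ∈ AU} = AU := by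
        ext ⟨a, b⟩; exact Iff.rfl
      rwa [hset] at hb
    have hUCcard : UC.ncard ≤ 2 * n - 2 := by
      rw [hUCeq, xiPairs_ncard]; exact hAUcard
    -- U = UC ∪ UN
    have hUsplit : U = UC ∪ UN := by
      apply Set.eq_of_subset_of_subset
      · intro f hf
        rcases hUCNS hf with hC | hN | ⟨k, l, α, rfl⟩
        · exact Or.inl ⟨hf, hC⟩
        · exact Or.inr ⟨hf, hN⟩
        · -- singleton maps cannot be independent generators
          exfalso
          rcases brandt_cases α with rfl | ⟨r, q, rfl⟩
          · -- sMap k l θ = xi θ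
            apply hUind _ hf
            have hV : UC ⊆ U \ {sMap k l (Brandt.theta n)} := by
              rintro g ⟨hg, i, j, rfl⟩
              refine ⟨hg, ?_⟩
              rw [Set.mem_singleton_iff, sMap_theta]
              intro hcon
              exact pair_ne_theta i j (xi_injective hcon)
            have hmem0 : xi (Brandt.theta n) ∈
                AddSubsemigroup.closure (U \ {sMap k l (Brandt.theta n)}) :=
              AddSubsemigroup.closure_mono hV (hallC _)
            exact (sMap_theta k l).symm ▸ hmem0
          · apply hUind _ hf
            have hV : UC ⊆ U \ {sMap k l (Brandt.pair r q)} := by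
              rintro g ⟨hg, i, j, rfl⟩
              refine ⟨hg, ?_⟩
              rw [Set.mem_singleton_iff]
              exact xi_ne_sMap hn i j k l _
            obtain ⟨q', hq'⟩ := nmap_in_closure hn hUCNS (hUcl _ (Or.inr (Or.inl ⟨l, q, 1, rfl⟩))) l q 1 rfl
            have hw : nMap l q' 1 ∈ U \ {sMap k l (Brandt.pair r q)} := by
              refine ⟨hq', ?_⟩
              rw [Set.mem_singleton_iff]
              exact nMap_ne_sMap hn l q' 1 k l _
            have hnmem : nMap l q 1 ∈
                AddSubsemigroup.closure (U \ {sMap k l (Brandt.pair r q)}) := by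
              have heq : nMap l q' 1 + xi (Brandt.pair q' q) = nMap l q 1 := by
                rw [nMap_add_xi, if_pos rfl]
              rw [← heq]
              exact AddSubsemigroup.add_mem _ (AddSubsemigroup.subset_closure hw)
                (AddSubsemigroup.closure_mono hV (hallC _))
            have hmem1 : xi (Brandt.pair r k) + nMap l q 1 ∈
                AddSubsemigroup.closure (U \ {sMap k l (Brandt.pair r q)}) :=
              AddSubsemigroup.add_mem _
                (AddSubsemigroup.closure_mono hV (hallC _)) hnmem
            exact (hsmap_split k l r q).symm ▸ hmem1
      · rintro f (⟨hf, -⟩ | ⟨hf, -⟩) <;> exact hf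
    have hdisjCN : Disjoint UC UN := by
      rw [Set.disjoint_left]
      rintro f ⟨-, i, j, rfl⟩ ⟨-, p, q, σ, hcon⟩
      exact nMap_ne_xi hn p q σ _ hcon.symm
    -- bound |UN| via the (p, σ) classifier
    have hUNcard : UN.ncard ≤ n * n.factorial := by
      set F : MB n → Fin n × Equiv.Perm (Fin n) := fun f =>
        if h : IsN f then (h.choose, h.choose_spec.choose_spec.choose) else (z0, 1) with hF
      have hFspec : ∀ f : MB n, ∀ h : IsN f, ∃ q, f = nMap (F f).1 q (F f).2 := by
        intro f h
        rw [hF]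
        simp only [dif_pos h]
        exact ⟨h.choose_spec.choose, h.choose_spec.choose_spec.choose_spec⟩
      have hInj : Set.InjOn F UN := by
        rintro u ⟨hu, hNu⟩ u' ⟨hu', hNu'⟩ heq
        by_contra hne
        obtain ⟨q, hq⟩ := hFspec u hNu
        obtain ⟨q', hq''⟩ := hFspec u' hNu'
        rw [heq] at hq
        -- u = nMap p q σ, u' = nMap p q' σ with the same p σ
        have hqq : q ≠ q' := by
          intro hcon
          exact hne (by rw [hq, hcon, ← hq''])
        apply hUind u' hu'
        have hV : UC ⊆ U \ {u'} := by
          rintro g ⟨hg, i, j, rfl⟩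
          refine ⟨hg, ?_⟩
          rw [Set.mem_singleton_iff]
          intro hcon
          rw [hq''] at hcon
          exact nMap_ne_xi hn _ _ _ _ hcon.symm
        have hu'' : u ∈ U \ {u'} := ⟨hu, by rw [Set.mem_singleton_iff]; exact hne⟩
        have heq2 : u + xi (Brandt.pair q q') = u' := by
          rw [hq, nMap_add_xi, if_pos rfl, ← hq'']
        have hmem2 : u + xi (Brandt.pair q q') ∈ AddSubsemigroup.closure (U \ {u'}) :=
          AddSubsemigroup.add_mem _ (AddSubsemigroup.subset_closure hu'')
            (AddSubsemigroup.closure_mono hV (hallC _))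
        exact heq2 ▸ hmem2
      calc UN.ncard ≤ (Set.univ : Set (Fin n × Equiv.Perm (Fin n))).ncard :=
            Set.ncard_le_ncard_of_injOn F (fun a _ => Set.mem_univ _) hInj (Set.toFinite _)
        _ = n * n.factorial := by rw [Set.ncard_univ, card_nmap_pairs]
    rw [hUsplit, Set.ncard_union_eq hdisjCN (Set.toFinite _) (Set.toFinite _)]
    have h2 : 2 ≤ 2 * n := by omega
    omega

end Final

/-- For `n ≥ 2`, the intermediate rank of `A⁺(Bₙ)` is
`r₃(A⁺(Bₙ)) = n·(n!) + 2n − 2`. -/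
theorem stmt_9 (n : ℕ) (hn : 2 ≤ n) :
    IsGreatest {m : ℕ | ∃ U : Set (MB n), U ⊆ AplusSet n ∧
      (AddSubsemigroup.closure U : Set (MB n)) = AplusSet n ∧
      IndepSet U ∧ U.ncard = m}
      (n * n.factorial + 2 * n - 2) := by
  exact stmt_9' n hn
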